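/- Let F ∈ ℂ[[t]] be the unique formal power series with constant coefficient 1 satisfying F(t·(1+2t)⁻¹) = F(t)·(1 − t²), and let P be the 4×4 permutation matrix over ℂ[[t]] representing the flip of ℂ² ⊗ ℂ² in the standard basis e_i ⊗ e_j (i.e. P(e_i ⊗ e_j) = e_j ⊗ e_i). Define R̄₊ = F(t)·(1 − t·P) and R̄₋ = F(−t)·(1 + t·P) in the ring of 4×4 matrices over ℂ[[t]], where F(−t) denotes substitution of −t into F. Then R̄₊ · R̄₋ = 1 (the identity matrix). -/

import Mathlib

/-!
Put `G = F(t) F(−t) (1 − t²)` and `φ = t (1 + 2t)⁻¹`. Substituting `−φ` into the functional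
equation and using `φ(−φ(t)) = −t` gives `F(−t) = F(−φ) (1 − φ²)`, from which `G(φ) = G`.
Since `φ = t − 2t² + O(t³)`, the lowest non-constant term `c tⁿ` of a series fixed by `φ`
would produce the non-zero term `−2n c tⁿ⁺¹` in the difference; hence `G` is the constant
`G(0) = 1`. As the flip `P` is an involution, `(1 − tP)(1 + tP) = 1 − t²`, and the matrix
identity reduces to `G = 1`.
-/

open PowerSeries

/-- Substitution of a power series `g` (with zero constant coefficient) into a power
series `F`: the `n`-th coefficient of `F(g)` is `∑_{k ≤ n} (coeff k F) · coeff n (g^k)`. -/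
noncomputable def psSubst (g F : PowerSeries ℂ) : PowerSeries ℂ :=
  PowerSeries.mk fun n =>
    ∑ k ∈ Finset.range (n + 1), PowerSeries.coeff k F * PowerSeries.coeff n (g ^ k)

namespace PowerSeries

variable {R : Type*} [CommRing R]

theorem coeff_subst_eq_sum_range {g : R⟦X⟧} (hg : constantCoeff g = 0)
    (F : R⟦X⟧) (n : ℕ) :
    coeff n (F.subst g) = ∑ d ∈ Finset.range (n + 1), coeff d F * coeff n (g ^ d) := by
  rw [coeff_subst' (HasSubst.of_constantCoeff_zero' hg), finsum_eq_sum_of_support_subset]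
  · rfl
  intro d hd
  by_contra hdn
  refine hd (smul_eq_zero_of_right _ (coeff_of_lt_order _ ?_))
  refine lt_of_lt_of_le ?_ (le_order_pow_of_constantCoeff_eq_zero d hg)
  simp only [Finset.coe_range, Set.mem_Iio, not_lt] at hdn
  exact_mod_cast hdn

theorem subst_neg_X {a : R⟦X⟧} (ha : HasSubst a) : (-X : R⟦X⟧).subst a = -a := by
  rw [← coe_substAlgHom ha, map_neg, substAlgHom_X]

theorem coeff_X_mul_pow_self (u : R⟦X⟧) (k : ℕ) :
    coeff k ((X * u) ^ k) = constantCoeff u ^ k := by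
  simpa [mul_pow] using coeff_X_pow_mul (u ^ k) k 0

theorem coeff_succ_X_mul_pow {u : R⟦X⟧} (hu : constantCoeff u = 1) (k : ℕ) :
    coeff (k + 1) ((X * u) ^ k) = k * coeff 1 u := by
  rw [mul_pow, add_comm, coeff_X_pow_mul, coeff_one_pow, hu, one_pow, mul_one]

theorem eq_C_of_subst_X_mul_eq_self [IsDomain R] [CharZero R] {u G : R⟦X⟧}
    (hu₀ : constantCoeff u = 1) (hu₁ : coeff 1 u ≠ 0) (hG : G.subst (X * u) = G) :
    G = C (constantCoeff G) := by
  suffices h : ∀ n, 0 < n → coeff n G = 0 by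
    ext (_ | n)
    · simp
    · simp [h]
  intro n
  induction n using Nat.strong_induction_on with
  | _ n ih =>
    intro hn
    have h := congrArg (coeff (n + 1)) hG
    rw [coeff_subst_eq_sum_range (by simp), Finset.sum_range_succ, Finset.sum_range_succ,
      coeff_X_mul_pow_self, coeff_succ_X_mul_pow hu₀, hu₀, one_pow, mul_one,
      add_eq_right, Finset.sum_eq_zero, zero_add] at h
    · exact (mul_eq_zero.mp h).resolve_right
        (mul_ne_zero (Nat.cast_ne_zero.mpr hn.ne') hu₁)
    · intro d hd
      rcases Nat.eq_zero_or_pos d with rfl | hd₀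
      · simp [coeff_one]
      · rw [ih d (Finset.mem_range.mp hd) hd₀, zero_mul]

end PowerSeries

section MobiusShift

variable {K : Type*} [Field K]

/-- In the variable `t = h/u`, the shift `u ↦ u + a h` is the substitution `t ↦ t (1 + a t)⁻¹`. -/
noncomputable def mobiusShift (a : K) : K⟦X⟧ := X * (1 + C a * X)⁻¹

theorem mobiusShift_mul_one_add_C_mul_X (a : K) : mobiusShift a * (1 + C a * X) = X := by
  rw [mobiusShift, mul_assoc, PowerSeries.inv_mul_cancel _ (by simp), mul_one]

@[simp]
theorem constantCoeff_mobiusShift (a : K) : constantCoeff (mobiusShift a) = 0 := by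
  simp [mobiusShift]

theorem constantCoeff_inv_one_add_C_mul_X (a : K) : constantCoeff (1 + C a * X)⁻¹ = 1 := by
  simp

theorem coeff_one_inv_one_add_C_mul_X (a : K) : coeff 1 (1 + C a * X)⁻¹ = -a := by
  have h := congrArg (coeff 1) (PowerSeries.mul_inv_cancel (1 + C a * X) (by simp))
  rw [coeff_one_mul, constantCoeff_inv_one_add_C_mul_X] at h
  simp at h
  linear_combination h

theorem subst_neg_mobiusShift (a : K) :
    (mobiusShift a).subst (-mobiusShift a) = -X := by
  set φ := mobiusShift a
  have hs : HasSubst (-φ) := .of_constantCoeff_zero' (by simp [φ])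
  have hφ : φ * (1 + C a * X) = X := mobiusShift_mul_one_add_C_mul_X a
  have h := congrArg (substAlgHom hs) hφ
  simp only [map_mul, map_add, map_one, substAlgHom_X, coe_substAlgHom] at h
  rw [show (C a).subst (-φ) = C a from subst_C a] at h
  have hunit : (1 + C a * -φ) * (1 + C a * X) = 1 := by
    linear_combination (-C a) * hφ
  calc φ.subst (-φ)
      = φ.subst (-φ) * ((1 + C a * -φ) * (1 + C a * X)) := by rw [hunit, mul_one]
    _ = -φ * (1 + C a * X) := by rw [← mul_assoc, h]
    _ = -X := by rw [neg_mul, hφ]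

theorem mul_subst_neg_X_mul_one_sub_X_sq_eq_one [CharZero K] {a : K} (ha : a ≠ 0) {F : K⟦X⟧}
    (hF₀ : constantCoeff F = 1) (hF : F.subst (mobiusShift a) = F * (1 - X ^ 2)) :
    F * F.subst (-X) * (1 - X ^ 2) = 1 := by
  set φ := mobiusShift a
  have hφ : HasSubst φ := .of_constantCoeff_zero' (constantCoeff_mobiusShift a)
  have hnφ : HasSubst (-φ) := .of_constantCoeff_zero' (by simp [φ])
  have hnX : HasSubst (-X : K⟦X⟧) := .of_constantCoeff_zero' (by simp)
  have hF_neg : F.subst (-X) = F.subst (-φ) * (1 - φ ^ 2) := by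
    have h := congrArg (substAlgHom hnφ) hF
    rw [map_mul, map_sub, map_one, map_pow, substAlgHom_X, neg_sq] at h
    simp only [coe_substAlgHom] at h
    rwa [subst_comp_subst_apply hφ hnφ, subst_neg_mobiusShift] at h
  have hF_neg_subst : subst φ (F.subst (-X) : K⟦X⟧) = F.subst (-φ) := by
    rw [subst_comp_subst_apply hnX hφ, subst_neg_X hφ]
  have hG : (F * F.subst (-X) * (1 - X ^ 2)).subst φ = F * F.subst (-X) * (1 - X ^ 2) := by
    rw [← coe_substAlgHom hφ, map_mul, map_mul, map_sub, map_one, map_pow, substAlgHom_X,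
      coe_substAlgHom, hF, hF_neg_subst, hF_neg]
    ring
  have hG₀ : constantCoeff (F * F.subst (-X) * (1 - X ^ 2)) = 1 := by
    have h : constantCoeff (F.subst (-X) : K⟦X⟧) = 1 := by
      rw [← coeff_zero_eq_constantCoeff_apply, coeff_subst_eq_sum_range (by simp)]
      simp [hF₀]
    simp [h, hF₀]
  rw [eq_C_of_subst_X_mul_eq_self (constantCoeff_inv_one_add_C_mul_X a)
    (by rw [coeff_one_inv_one_add_C_mul_X]; exact neg_ne_zero.mpr ha) hG, hG₀, map_one]

end MobiusShift

theorem Matrix.smul_one_sub_smul_mul_smul_one_add_smul {n R : Type*} [Fintype n] [DecidableEq n]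
    [CommRing R] {P : Matrix n n R} (hP : P * P = 1) (f g x : R) :
    (f • (1 - x • P)) * (g • (1 + x • P)) = (f * g * (1 - x ^ 2)) • (1 : Matrix n n R) := by
  have h : (1 - x • P) * (1 + x • P) = (1 - x ^ 2) • (1 : Matrix n n R) := by
    rw [sub_mul, mul_add, mul_add, one_mul, one_mul, mul_one, smul_mul_smul, hP, ← pow_two,
      sub_smul, one_smul]
    abel
  rw [Matrix.smul_mul, Matrix.mul_smul, smul_smul, h, smul_smul]

theorem Matrix.flip_mul_self {ι R : Type*} [Fintype ι] [DecidableEq ι] [Semiring R]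
    {P : Matrix (ι × ι) (ι × ι) R}
    (hP : ∀ i j k l, P (i, j) (k, l) = if i = l ∧ j = k then 1 else 0) : P * P = 1 := by
  ext ⟨i, j⟩ ⟨k, l⟩
  simp [Matrix.mul_apply, Fintype.sum_prod_type, hP, Matrix.one_apply, Prod.ext_iff, ite_and,
    Finset.sum_ite_eq']

theorem psSubst_eq_subst {g : ℂ⟦X⟧} (hg : constantCoeff g = 0) (F : ℂ⟦X⟧) :
    psSubst g F = F.subst g := by
  ext n
  rw [coeff_subst_eq_sum_range hg]
  simp [psSubst]

/-- Let `F ∈ ℂ[[t]]` have constant coefficient `1` and satisfy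
`F(t·(1+2t)⁻¹) = F(t)·(1 − t²)`, and let `P` be the `4×4` permutation matrix (rows and
columns indexed by pairs `(i,j)` of indices of the standard basis `e_i ⊗ e_j` of
`ℂ² ⊗ ℂ²`) representing the flip `e_k ⊗ e_l ↦ e_l ⊗ e_k`, i.e.
`P (i,j) (k,l) = δ_{i l} δ_{j k}`. Then
`(F(t)·(1 − t·P)) · (F(−t)·(1 + t·P)) = 1`. -/
theorem normalized_R_matrix_unitarity (F : PowerSeries ℂ)
    (hF1 : PowerSeries.constantCoeff F = 1)
    (hF2 : psSubst (PowerSeries.X * (1 + 2 * PowerSeries.X)⁻¹) F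
      = F * (1 - PowerSeries.X ^ 2))
    (P : Matrix (Fin 2 × Fin 2) (Fin 2 × Fin 2) (PowerSeries ℂ))
    (hP : ∀ i j k l : Fin 2, P (i, j) (k, l) = if i = l ∧ j = k then 1 else 0) :
    (F • ((1 : Matrix (Fin 2 × Fin 2) (Fin 2 × Fin 2) (PowerSeries ℂ))
        - (PowerSeries.X : PowerSeries ℂ) • P)) *
      ((psSubst (-PowerSeries.X) F : PowerSeries ℂ) •
        ((1 : Matrix (Fin 2 × Fin 2) (Fin 2 × Fin 2) (PowerSeries ℂ))
          + (PowerSeries.X : PowerSeries ℂ) • P)) = 1 := by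
  have hshift : X * (1 + 2 * X)⁻¹ = mobiusShift (2 : ℂ) := by
    rw [mobiusShift, map_ofNat]
  rw [hshift, psSubst_eq_subst (constantCoeff_mobiusShift 2)] at hF2
  rw [psSubst_eq_subst (by simp), Matrix.smul_one_sub_smul_mul_smul_one_add_smul
    (Matrix.flip_mul_self hP), mul_subst_neg_X_mul_one_sub_X_sq_eq_one two_ne_zero hF1 hF2,
    one_smul]
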